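/- The Picard operator Θ of the fractional SIRS iterative scheme satisfies ‖Θ(Ωₙ) − Θ(Ω_m)‖_W ≤ L((1−α)/B(α) + δ^α/(B(α)Γ(α)))‖Ωₙ − Ω_m‖_W for any two functions Ωₙ, Ω_m ∈ W; hence if L((1−α)/B(α) + δ^α/(B(α)Γ(α))) < 1, the iterative scheme is Θ-stable (Picard-stable). -/

import Mathlib

/-!
In the difference of two Picard images `Ω₀` cancels; the local term contributes
`(1 - α)/B · L ‖Ω₁ - Ω₂‖_W`, and since `∫₀ᵗ (t - p)^(α-1) dp = t^α/α ≤ δ^α/α`, the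
Riemann–Liouville term contributes `δ^α/(B Γ(α)) · L ‖Ω₁ - Ω₂‖_W`.
For stability, let `p = Θ p` and `aₙ = ‖xₙ - p‖_W`: the triangle inequality through `Θ xₙ` gives
`aₙ₊₁ ≤ k aₙ + ‖xₙ₊₁ - Θ xₙ‖_W`, where `k < 1` is the Lipschitz constant of `Θ` just obtained,
and a contraction with vanishing forcing term drives `aₙ` to `0`.
-/

open Set MeasureTheory

/-- State space `ℝ³` with the `ℓ¹` norm. -/
noncomputable abbrev V := PiLp 1 (fun _ : Fin 3 => ℝ)

/-- The Picard operator associated with the ABC fractional SIRS integral equation. -/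
noncomputable def picard (α B : ℝ) (Ω₀ : V) (F : V → V) (Ω : ℝ → V) (t : ℝ) : V :=
  Ω₀ + ((1 - α) / B) • F (Ω t)
    + (α / (B * Real.Gamma α)) • ∫ p in (0:ℝ)..t, ((t - p) ^ (α - 1)) • F (Ω p)

open Filter Topology

namespace Real

variable {ι : Type*} {s : Set ι} {f : ι → ℝ}

lemma biSup_le {C : ℝ} (hC : 0 ≤ C) (h : ∀ i ∈ s, f i ≤ C) : ⨆ i ∈ s, f i ≤ C :=
  Real.iSup_le (fun i => Real.iSup_le (h i) hC) hC

lemma biSup_nonneg (h : ∀ i ∈ s, 0 ≤ f i) : 0 ≤ ⨆ i ∈ s, f i :=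
  Real.iSup_nonneg fun i => Real.iSup_nonneg (h i)

lemma le_biSup (hf : BddAbove (f '' s)) {i : ι} (hi : i ∈ s) : f i ≤ ⨆ j ∈ s, f j :=
  le_ciSup₂ (f := fun j (_ : j ∈ s) => f j)
    (hf.mono <| iUnion_subset fun _ => range_subset_iff.2 fun hj => mem_image_of_mem f hj) i hi

end Real

lemma norm_sub_le_of_mem_closedBall {E : Type*} [SeminormedAddCommGroup E] {x u v : E} {r : ℝ}
    (hu : u ∈ Metric.closedBall x r) (hv : v ∈ Metric.closedBall x r) : ‖u - v‖ ≤ 2 * r := by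
  rw [mem_closedBall_iff_norm] at hu hv
  calc ‖u - v‖ ≤ ‖u - x‖ + ‖x - v‖ := norm_sub_le_norm_sub_add_norm_sub ..
    _ ≤ 2 * r := by rw [norm_sub_rev x]; linarith

lemma bddAbove_norm_sub_image_of_mapsTo_closedBall {ι E : Type*} [SeminormedAddCommGroup E]
    {s : Set ι} {f g : ι → E} {x : E} {r : ℝ} (hf : MapsTo f s (Metric.closedBall x r))
    (hg : MapsTo g s (Metric.closedBall x r)) : BddAbove ((fun i => ‖f i - g i‖) '' s) :=
  ⟨2 * r, forall_mem_image.2 fun _ hi => norm_sub_le_of_mem_closedBall (hf hi) (hg hi)⟩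

lemma ContinuousOn.comp_of_norm_sub_le_mul {X E E' : Type*} [TopologicalSpace X]
    [SeminormedAddCommGroup E] [SeminormedAddCommGroup E'] {F : E → E'} {S : Set E} {L : ℝ}
    (hF : ∀ x ∈ S, ∀ y ∈ S, ‖F x - F y‖ ≤ L * ‖x - y‖) {Ω : X → E} {T : Set X}
    (hΩ : ContinuousOn Ω T) (hΩS : MapsTo Ω T S) : ContinuousOn (F ∘ Ω) T := by
  refine (LipschitzOnWith.of_dist_le_mul (K := L.toNNReal) fun x hx y hy => ?_).continuousOn.comp
    hΩ hΩS
  rw [dist_eq_norm, dist_eq_norm]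
  exact (hF x hx y hy).trans (mul_le_mul_of_nonneg_right (Real.le_coe_toNNReal L) (norm_nonneg _))

lemma tendsto_zero_of_le_mul_add {a b : ℕ → ℝ} {k : ℝ} (hk₀ : 0 ≤ k) (hk₁ : k < 1)
    (ha : ∀ n, 0 ≤ a n) (hab : ∀ n, a (n + 1) ≤ k * a n + b n)
    (hb : Tendsto b atTop (𝓝 0)) : Tendsto a atTop (𝓝 0) := by
  refine tendsto_order.2 ⟨fun c hc => .of_forall fun n => hc.trans_le (ha n), fun ε hε => ?_⟩
  obtain ⟨N, hN⟩ := eventually_atTop.1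
    (hb.eventually (eventually_le_nhds (show 0 < (1 - k) * (ε / 2) by nlinarith)))
  -- once `b ≤ (1 - k) ε/2`, the excess `a - ε/2` is contracted by `k` at every step
  have hgeom (m : ℕ) : a (N + m) - ε / 2 ≤ k ^ m * (a N - ε / 2) :=
    le_geom (u := fun m => a (N + m) - ε / 2) hk₀ m fun j _ => by
      have := hab (N + j)
      have := hN (N + j) (by omega)
      simp only [← add_assoc]
      linarith
  have hpow : Tendsto (fun m => k ^ m * (a N - ε / 2)) atTop (𝓝 0) := by
    simpa using (tendsto_pow_atTop_nhds_zero_of_lt_one hk₀ hk₁).mul_const (a N - ε / 2)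
  obtain ⟨M, hM⟩ := eventually_atTop.1 (hpow.eventually (eventually_lt_nhds (half_pos hε)))
  refine eventually_atTop.2 ⟨N + M, fun n hn => ?_⟩
  obtain ⟨m, rfl⟩ := Nat.exists_eq_add_of_le (le_of_add_le_left hn)
  linarith [hgeom m, hM m (by omega)]

section RiemannLiouvilleKernel

variable {E : Type*} [NormedAddCommGroup E] [NormedSpace ℝ E] {α : ℝ}

lemma intervalIntegrable_sub_rpow (hα : 0 < α) (t : ℝ) :
    IntervalIntegrable (fun p => (t - p) ^ (α - 1)) volume 0 t := by
  simpa using ((intervalIntegral.intervalIntegrable_rpow' (by linarith : -1 < α - 1)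
    (a := 0) (b := t)).comp_sub_left t).symm

lemma integral_sub_rpow (hα : 0 < α) (t : ℝ) :
    ∫ p in (0:ℝ)..t, (t - p) ^ (α - 1) = t ^ α / α := by
  rw [intervalIntegral.integral_comp_sub_left (fun x => x ^ (α - 1)),
    integral_rpow (Or.inl (by linarith))]
  simp [Real.zero_rpow hα.ne']

lemma norm_integral_sub_rpow_smul_le (hα : 0 < α) {t C : ℝ} (ht : 0 ≤ t) {g : ℝ → E}
    (hg : ∀ p ∈ Ioc 0 t, ‖g p‖ ≤ C) :
    ‖∫ p in (0:ℝ)..t, (t - p) ^ (α - 1) • g p‖ ≤ t ^ α / α * C := by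
  rw [← integral_sub_rpow hα, ← intervalIntegral.integral_mul_const]
  refine intervalIntegral.norm_integral_le_of_norm_le ht (.of_forall fun p hp => ?_)
    ((intervalIntegrable_sub_rpow hα t).mul_const C)
  have hker : 0 ≤ (t - p) ^ (α - 1) := Real.rpow_nonneg (by linarith [hp.2]) _
  rw [norm_smul, Real.norm_of_nonneg hker]
  exact mul_le_mul_of_nonneg_left (hg p hp) hker

end RiemannLiouvilleKernel

section PicardOperator

variable {α B : ℝ} {Ω₀ : V} {F : V → V} {Ω₁ Ω₂ : ℝ → V} {t : ℝ}

lemma picard_sub_picard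
    (h₁ : IntervalIntegrable (fun p => (t - p) ^ (α - 1) • F (Ω₁ p)) volume 0 t)
    (h₂ : IntervalIntegrable (fun p => (t - p) ^ (α - 1) • F (Ω₂ p)) volume 0 t) :
    picard α B Ω₀ F Ω₁ t - picard α B Ω₀ F Ω₂ t =
      ((1 - α) / B) • (F (Ω₁ t) - F (Ω₂ t)) +
        (α / (B * Real.Gamma α)) • ∫ p in (0:ℝ)..t, (t - p) ^ (α - 1) • (F (Ω₁ p) - F (Ω₂ p)) := by
  simp only [picard, smul_sub, intervalIntegral.integral_sub h₁ h₂]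
  abel

lemma norm_picard_sub_picard_le (hα : 0 < α) (hα₁ : α ≤ 1) (hB : 0 < B) (ht : 0 ≤ t)
    (h₁ : ContinuousOn (F ∘ Ω₁) (Icc 0 t)) (h₂ : ContinuousOn (F ∘ Ω₂) (Icc 0 t)) {D : ℝ}
    (hD : ∀ p ∈ Icc 0 t, ‖F (Ω₁ p) - F (Ω₂ p)‖ ≤ D) :
    ‖picard α B Ω₀ F Ω₁ t - picard α B Ω₀ F Ω₂ t‖ ≤
      ((1 - α) / B + t ^ α / (B * Real.Gamma α)) * D := by
  have hc₁ : 0 ≤ (1 - α) / B := div_nonneg (by linarith) hB.le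
  have hc₂ : 0 ≤ α / (B * Real.Gamma α) := by positivity
  have hint {Ω : ℝ → V} (hΩ : ContinuousOn (F ∘ Ω) (Icc 0 t)) :
      IntervalIntegrable (fun p => (t - p) ^ (α - 1) • F (Ω p)) volume 0 t :=
    (intervalIntegrable_sub_rpow hα t).smul_continuousOn (by rwa [uIcc_of_le ht])
  have hI := norm_integral_sub_rpow_smul_le hα ht fun p hp => hD p (Ioc_subset_Icc_self hp)
  rw [picard_sub_picard (hint h₁) (hint h₂)]
  calc _ ≤ (1 - α) / B * ‖F (Ω₁ t) - F (Ω₂ t)‖ + α / (B * Real.Gamma α) *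
          ‖∫ p in (0:ℝ)..t, (t - p) ^ (α - 1) • (F (Ω₁ p) - F (Ω₂ p))‖ := by
        refine (norm_add_le _ _).trans_eq ?_
        rw [norm_smul, norm_smul, Real.norm_of_nonneg hc₁, Real.norm_of_nonneg hc₂]
    _ ≤ (1 - α) / B * D + α / (B * Real.Gamma α) * (t ^ α / α * D) := by
        gcongr
        exact hD t (right_mem_Icc.2 ht)
    _ = ((1 - α) / B + t ^ α / (B * Real.Gamma α)) * D := by
        field_simp

end PicardOperator

section PicardScheme

variable {α B δ L ρ : ℝ} {Ω₀ : V} {F : V → V}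

lemma picard_contraction_factor_nonneg (hα : 0 < α) (hα₁ : α ≤ 1) (hB : 0 < B) (hδ : 0 ≤ δ)
    (hL : 0 ≤ L) : 0 ≤ L * ((1 - α) / B + δ ^ α / (B * Real.Gamma α)) := by
  have : 0 ≤ (1 - α) / B := div_nonneg (by linarith) hB.le
  positivity

variable (hα : 0 < α) (hα₁ : α ≤ 1) (hB : 0 < B) (hL : 0 ≤ L)
  (hLip : ∀ x ∈ Metric.closedBall Ω₀ ρ, ∀ y ∈ Metric.closedBall Ω₀ ρ, ‖F x - F y‖ ≤ L * ‖x - y‖)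
include hα hα₁ hB hL hLip

lemma norm_picard_sub_picard_le_mul_biSup {Ω₁ Ω₂ : ℝ → V} (h₁c : ContinuousOn Ω₁ (Icc 0 δ))
    (h₁ : ∀ t ∈ Icc (0:ℝ) δ, Ω₁ t ∈ Metric.closedBall Ω₀ ρ) (h₂c : ContinuousOn Ω₂ (Icc 0 δ))
    (h₂ : ∀ t ∈ Icc (0:ℝ) δ, Ω₂ t ∈ Metric.closedBall Ω₀ ρ) {t : ℝ} (ht : t ∈ Icc 0 δ) :
    ‖picard α B Ω₀ F Ω₁ t - picard α B Ω₀ F Ω₂ t‖ ≤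
      L * ((1 - α) / B + δ ^ α / (B * Real.Gamma α)) * ⨆ u ∈ Icc (0:ℝ) δ, ‖Ω₁ u - Ω₂ u‖ := by
  set M := ⨆ u ∈ Icc (0:ℝ) δ, ‖Ω₁ u - Ω₂ u‖
  have hM {u : ℝ} (hu : u ∈ Icc 0 δ) : ‖Ω₁ u - Ω₂ u‖ ≤ M :=
    Real.le_biSup (bddAbove_norm_sub_image_of_mapsTo_closedBall h₁ h₂) hu
  have hsub : Icc 0 t ⊆ Icc 0 δ := Icc_subset_Icc_right ht.2
  calc _ ≤ ((1 - α) / B + t ^ α / (B * Real.Gamma α)) * (L * M) :=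
        norm_picard_sub_picard_le hα hα₁ hB ht.1 ((h₁c.comp_of_norm_sub_le_mul hLip h₁).mono hsub)
          ((h₂c.comp_of_norm_sub_le_mul hLip h₂).mono hsub) fun p hp =>
            (hLip _ (h₁ p (hsub hp)) _ (h₂ p (hsub hp))).trans (by gcongr; exact hM (hsub hp))
    _ ≤ ((1 - α) / B + δ ^ α / (B * Real.Gamma α)) * (L * M) := by
        have : 0 ≤ M := (norm_nonneg _).trans (hM ht)
        have := ht.1
        gcongr
        exact ht.2
    _ = _ := by ring

lemma biSup_norm_picard_sub_picard_le (hδ : 0 ≤ δ) {Ω₁ Ω₂ : ℝ → V}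
    (h₁c : ContinuousOn Ω₁ (Icc 0 δ)) (h₁ : ∀ t ∈ Icc (0:ℝ) δ, Ω₁ t ∈ Metric.closedBall Ω₀ ρ)
    (h₂c : ContinuousOn Ω₂ (Icc 0 δ)) (h₂ : ∀ t ∈ Icc (0:ℝ) δ, Ω₂ t ∈ Metric.closedBall Ω₀ ρ) :
    ⨆ t ∈ Icc (0:ℝ) δ, ‖picard α B Ω₀ F Ω₁ t - picard α B Ω₀ F Ω₂ t‖ ≤
      L * ((1 - α) / B + δ ^ α / (B * Real.Gamma α)) * ⨆ t ∈ Icc (0:ℝ) δ, ‖Ω₁ t - Ω₂ t‖ :=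
  Real.biSup_le
    (mul_nonneg (picard_contraction_factor_nonneg hα hα₁ hB hδ hL)
      (Real.biSup_nonneg fun _ _ => norm_nonneg _))
    fun _ ht => norm_picard_sub_picard_le_mul_biSup hα hα₁ hB hL hLip h₁c h₁ h₂c h₂ ht

lemma biSup_norm_sub_fixedPoint_le (hδ : 0 ≤ δ) {p x y : ℝ → V}
    (hpc : ContinuousOn p (Icc 0 δ)) (hp : ∀ t ∈ Icc (0:ℝ) δ, p t ∈ Metric.closedBall Ω₀ ρ)
    (hfix : ∀ t ∈ Icc (0:ℝ) δ, picard α B Ω₀ F p t = p t)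
    (hxc : ContinuousOn x (Icc 0 δ)) (hx : ∀ t ∈ Icc (0:ℝ) δ, x t ∈ Metric.closedBall Ω₀ ρ)
    (hy : ∀ t ∈ Icc (0:ℝ) δ, y t ∈ Metric.closedBall Ω₀ ρ) :
    ⨆ t ∈ Icc (0:ℝ) δ, ‖y t - p t‖ ≤
      L * ((1 - α) / B + δ ^ α / (B * Real.Gamma α)) * (⨆ t ∈ Icc (0:ℝ) δ, ‖x t - p t‖) +
        ⨆ t ∈ Icc (0:ℝ) δ, ‖y t - picard α B Ω₀ F x t‖ := by
  set k := L * ((1 - α) / B + δ ^ α / (B * Real.Gamma α))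
  set a := ⨆ t ∈ Icc (0:ℝ) δ, ‖x t - p t‖
  set b := ⨆ t ∈ Icc (0:ℝ) δ, ‖y t - picard α B Ω₀ F x t‖
  have hΘ : ∀ t ∈ Icc 0 δ, ‖picard α B Ω₀ F x t - p t‖ ≤ k * a := fun t ht => by
    rw [← hfix t ht]
    exact norm_picard_sub_picard_le_mul_biSup hα hα₁ hB hL hLip hxc hx hpc hp ht
  have hb : ∀ t ∈ Icc 0 δ, ‖y t - picard α B Ω₀ F x t‖ ≤ b := by
    refine fun t ht => Real.le_biSup (f := fun t => ‖y t - picard α B Ω₀ F x t‖)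
      ⟨2 * ρ + k * a, forall_mem_image.2 fun u hu => ?_⟩ ht
    calc ‖y u - picard α B Ω₀ F x u‖ ≤ ‖y u - p u‖ + ‖picard α B Ω₀ F x u - p u‖ :=
          (norm_sub_le_norm_sub_add_norm_sub _ (p u) _).trans_eq (by rw [norm_sub_rev (p u)])
      _ ≤ 2 * ρ + k * a :=
          add_le_add (norm_sub_le_of_mem_closedBall (hy u hu) (hp u hu)) (hΘ u hu)
  have hk := picard_contraction_factor_nonneg hα hα₁ hB hδ hL
  have ha : 0 ≤ a := Real.biSup_nonneg fun _ _ => norm_nonneg _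
  have hb₀ : 0 ≤ b := Real.biSup_nonneg fun _ _ => norm_nonneg _
  refine Real.biSup_le (by positivity) fun t ht => ?_
  calc ‖y t - p t‖ ≤ ‖y t - picard α B Ω₀ F x t‖ + ‖picard α B Ω₀ F x t - p t‖ :=
        norm_sub_le_norm_sub_add_norm_sub ..
    _ ≤ b + k * a := add_le_add (hb t ht) (hΘ t ht)
    _ = k * a + b := add_comm ..

end PicardScheme

theorem picard_scheme_theta_stable_general (α B δ L ρ : ℝ) (Ω₀ : V) (F : V → V)
    (hα : 0 < α) (hα1 : α < 1) (hB : 0 < B) (hδ : 0 < δ) (hL : 0 ≤ L)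
    (hLip : ∀ x ∈ Metric.closedBall Ω₀ ρ, ∀ y ∈ Metric.closedBall Ω₀ ρ,
      ‖F x - F y‖ ≤ L * ‖x - y‖) :
    (∀ Ω₁ Ω₂ : ℝ → V,
      ContinuousOn Ω₁ (Icc 0 δ) → Ω₁ 0 = Ω₀ →
        (∀ t ∈ Icc (0:ℝ) δ, Ω₁ t ∈ Metric.closedBall Ω₀ ρ) →
      ContinuousOn Ω₂ (Icc 0 δ) → Ω₂ 0 = Ω₀ →
        (∀ t ∈ Icc (0:ℝ) δ, Ω₂ t ∈ Metric.closedBall Ω₀ ρ) →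
      (⨆ t ∈ Icc (0:ℝ) δ, ‖picard α B Ω₀ F Ω₁ t - picard α B Ω₀ F Ω₂ t‖) ≤
        L * ((1 - α) / B + δ ^ α / (B * Real.Gamma α)) *
          ⨆ t ∈ Icc (0:ℝ) δ, ‖Ω₁ t - Ω₂ t‖) ∧
    (L * ((1 - α) / B + δ ^ α / (B * Real.Gamma α)) < 1 →
      ∀ p : ℝ → V, ContinuousOn p (Icc 0 δ) → p 0 = Ω₀ →
        (∀ t ∈ Icc (0:ℝ) δ, p t ∈ Metric.closedBall Ω₀ ρ) →
        (∀ t ∈ Icc (0:ℝ) δ, picard α B Ω₀ F p t = p t) →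
      ∀ x : ℕ → (ℝ → V),
        (∀ n, ContinuousOn (x n) (Icc 0 δ) ∧ x n 0 = Ω₀ ∧
          ∀ t ∈ Icc (0:ℝ) δ, x n t ∈ Metric.closedBall Ω₀ ρ) →
        Filter.Tendsto
          (fun n => ⨆ t ∈ Icc (0:ℝ) δ, ‖x (n + 1) t - picard α B Ω₀ F (x n) t‖)
          Filter.atTop (nhds 0) →
        Filter.Tendsto (fun n => ⨆ t ∈ Icc (0:ℝ) δ, ‖x n t - p t‖)
          Filter.atTop (nhds 0)) := by
  refine ⟨fun Ω₁ Ω₂ h₁c _ h₁ h₂c _ h₂ =>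
    biSup_norm_picard_sub_picard_le hα hα1.le hB hL hLip hδ.le h₁c h₁ h₂c h₂, ?_⟩
  intro hk p hpc _ hp hfix x hx hstep
  exact tendsto_zero_of_le_mul_add (picard_contraction_factor_nonneg hα hα1.le hB hδ.le hL) hk
    (fun _ => Real.biSup_nonneg fun _ _ => norm_nonneg _)
    (fun n => biSup_norm_sub_fixedPoint_le hα hα1.le hB hL hLip hδ.le hpc hp hfix (hx n).1
      (hx n).2.2 (hx (n + 1)).2.2)
    hstep

theorem picard_scheme_theta_stable (α B δ L ρ : ℝ) (Ω₀ : V) (F : V → V)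
    (hα : 0 < α) (hα1 : α < 1) (hB : 0 < B) (hδ : 0 < δ) (hL : 0 ≤ L) (hρ : 0 < ρ)
    (hLip : ∀ x ∈ Metric.closedBall Ω₀ ρ, ∀ y ∈ Metric.closedBall Ω₀ ρ,
      ‖F x - F y‖ ≤ L * ‖x - y‖) :
    (∀ Ω₁ Ω₂ : ℝ → V,
      ContinuousOn Ω₁ (Icc 0 δ) → Ω₁ 0 = Ω₀ →
        (∀ t ∈ Icc (0:ℝ) δ, Ω₁ t ∈ Metric.closedBall Ω₀ ρ) →
      ContinuousOn Ω₂ (Icc 0 δ) → Ω₂ 0 = Ω₀ →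
        (∀ t ∈ Icc (0:ℝ) δ, Ω₂ t ∈ Metric.closedBall Ω₀ ρ) →
      (⨆ t ∈ Icc (0:ℝ) δ, ‖picard α B Ω₀ F Ω₁ t - picard α B Ω₀ F Ω₂ t‖) ≤
        L * ((1 - α) / B + δ ^ α / (B * Real.Gamma α)) *
          ⨆ t ∈ Icc (0:ℝ) δ, ‖Ω₁ t - Ω₂ t‖) ∧
    (L * ((1 - α) / B + δ ^ α / (B * Real.Gamma α)) < 1 →
      ∀ p : ℝ → V, ContinuousOn p (Icc 0 δ) → p 0 = Ω₀ →
        (∀ t ∈ Icc (0:ℝ) δ, p t ∈ Metric.closedBall Ω₀ ρ) →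
        (∀ t ∈ Icc (0:ℝ) δ, picard α B Ω₀ F p t = p t) →
      ∀ x : ℕ → (ℝ → V),
        (∀ n, ContinuousOn (x n) (Icc 0 δ) ∧ x n 0 = Ω₀ ∧
          ∀ t ∈ Icc (0:ℝ) δ, x n t ∈ Metric.closedBall Ω₀ ρ) →
        Filter.Tendsto
          (fun n => ⨆ t ∈ Icc (0:ℝ) δ, ‖x (n + 1) t - picard α B Ω₀ F (x n) t‖)
          Filter.atTop (nhds 0) →
        Filter.Tendsto (fun n => ⨆ t ∈ Icc (0:ℝ) δ, ‖x n t - p t‖)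
          Filter.atTop (nhds 0)) :=
  picard_scheme_theta_stable_general α B δ L ρ Ω₀ F hα hα1 hB hδ hL hLip
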